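/- arXiv:1206.2506 — 2 statements merged into one kernel-verified Lean document; each statement's English description precedes it below -/
import Mathlib

section
/- Let H be a finite-dimensional complex inner product space, let d_1, …, d_m ∈ H be linearly independent, and let A_1, …, A_r be linear operators on H satisfying ∑_{s=1}^r A_s* A_s = ∑_{k=1}^m |d_k⟩⟨d_k|. Then there exist vectors φ_{ks} ∈ H (1 ≤ k ≤ m, 1 ≤ s ≤ r) such that A_s = ∑_{k=1}^m |φ_{ks}⟩⟨d_k| for every s, and ∑_{s=1}^r ⟨φ_{ks}, φ_{ls}⟩ = δ_{kl} for all k, l. -/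
/-!
Choose vectors `c_k` biorthogonal to the `d_k`, i.e. `⟨c_k, d_j⟩ = δ_{kj}` (Riesz representatives of
the coordinate functionals of the independent family), and put `φ_{ks} = A_s c_k`.
Evaluating `⟨ψ, (∑_s A_s* A_s) ψ⟩ = ∑_k |⟨d_k, ψ⟩|²` shows that every `A_s` kills the orthogonal
complement of the `d_k`; since `ψ - ∑_k ⟨d_k, ψ⟩ c_k` lies there, `A_s ψ = ∑_k ⟨d_k, ψ⟩ A_s c_k`.
Finally `∑_s ⟨A_s c_k, A_s c_l⟩ = ⟨c_k, (∑_j |d_j⟩⟨d_j|) c_l⟩ = δ_{kl}` by biorthogonality.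
-/

/-- The rank-one operator `|u⟩⟨v| : ψ ↦ ⟨v, ψ⟩ u` (inner product conjugate-linear in the
first argument, linear in the second). -/
noncomputable def rankOne {H : Type*} [NormedAddCommGroup H] [InnerProductSpace ℂ H]
    (u v : H) : H →ₗ[ℂ] H where
  toFun ψ := (inner ℂ v ψ : ℂ) • u
  map_add' x y := by simp [inner_add_right, add_smul]
  map_smul' c x := by simp [inner_smul_right, smul_smul]

open Module LinearMap

@[simp] theorem rankOne_apply {H : Type*} [NormedAddCommGroup H] [InnerProductSpace ℂ H]
    (u v ψ : H) : rankOne u v ψ = inner ℂ v ψ • u := rfl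

theorem LinearIndependent.exists_biorthogonal_dual {ι K V : Type*} [Fintype ι] [DecidableEq ι]
    [Field K] [AddCommGroup V] [Module K V] {v : ι → V} (hv : LinearIndependent K v) :
    ∃ f : ι → Dual K V, ∀ i j, f i (v j) = if i = j then 1 else 0 := by
  obtain ⟨g, hg⟩ := exists_leftInverse_of_injective (Fintype.linearCombination K v)
    (ker_eq_bot.mpr hv.fintypeLinearCombination_injective)
  refine ⟨fun i => proj i ∘ₗ g, fun i j => ?_⟩
  have hgv : g (v j) = Pi.single j 1 := by
    simpa [Fintype.linearCombination_apply_single] using congr($hg (Pi.single j 1))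
  simp [hgv, Pi.single_apply]

theorem LinearIndependent.exists_biorthogonal {ι 𝕜 E : Type*} [Fintype ι] [DecidableEq ι]
    [RCLike 𝕜] [NormedAddCommGroup E] [InnerProductSpace 𝕜 E] [FiniteDimensional 𝕜 E]
    {v : ι → E} (hv : LinearIndependent 𝕜 v) :
    ∃ w : ι → E, ∀ i j, inner 𝕜 (w i) (v j) = if i = j then 1 else 0 := by
  have := FiniteDimensional.complete 𝕜 E
  obtain ⟨f, hf⟩ := hv.exists_biorthogonal_dual
  exact ⟨fun i => (InnerProductSpace.toDual 𝕜 E).symm (f i).toContinuousLinearMap,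
    fun i j => by rw [InnerProductSpace.toDual_symm_apply]; exact hf i j⟩

theorem inner_swap_eq_ite_of_biorthogonal {ι 𝕜 E : Type*} [DecidableEq ι] [RCLike 𝕜]
    [NormedAddCommGroup E] [InnerProductSpace 𝕜 E] {v w : ι → E}
    (h : ∀ i j, inner 𝕜 (w i) (v j) = if i = j then 1 else 0) (i j : ι) :
    inner 𝕜 (v j) (w i) = if i = j then 1 else 0 := by
  rw [← inner_conj_symm, h]
  split_ifs <;> simp

theorem LinearMap.inner_sum_adjoint_comp_self_apply {ι 𝕜 E F : Type*} [Fintype ι] [RCLike 𝕜]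
    [NormedAddCommGroup E] [InnerProductSpace 𝕜 E] [FiniteDimensional 𝕜 E]
    [NormedAddCommGroup F] [InnerProductSpace 𝕜 F] [FiniteDimensional 𝕜 F]
    (A : ι → E →ₗ[𝕜] F) (x y : E) :
    inner 𝕜 x ((∑ s, adjoint (A s) ∘ₗ A s) y) = ∑ s, inner 𝕜 (A s x) (A s y) := by
  simp [LinearMap.sum_apply, inner_sum, adjoint_inner_right]

section
variable {H : Type*} [NormedAddCommGroup H] [InnerProductSpace ℂ H] {ι κ : Type*} [Fintype κ]

theorem inner_sum_rankOne_self_apply (d : κ → H) (x y : H) :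
    inner ℂ x ((∑ k, rankOne (d k) (d k)) y) = ∑ k, inner ℂ x (d k) * inner ℂ (d k) y := by
  simp [LinearMap.sum_apply, mul_comm]

theorem apply_eq_zero_of_sum_adjoint_comp_self_eq [Fintype ι] [FiniteDimensional ℂ H]
    {A : ι → H →ₗ[ℂ] H} {d : κ → H}
    (hA : ∑ s, adjoint (A s) ∘ₗ A s = ∑ k, rankOne (d k) (d k))
    {ψ : H} (hψ : ∀ k, inner ℂ (d k) ψ = 0) (s : ι) : A s ψ = 0 := by
  have hsum : ∑ t, ‖A t ψ‖ ^ 2 = 0 := by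
    have h := inner_sum_adjoint_comp_self_apply A ψ ψ
    rw [hA, inner_sum_rankOne_self_apply] at h
    simpa [hψ, ← inner_self_eq_norm_sq (𝕜 := ℂ)] using congrArg RCLike.re h.symm
  have hs := (Finset.sum_eq_zero_iff_of_nonneg fun t _ => sq_nonneg ‖A t ψ‖).mp hsum s
    (Finset.mem_univ s)
  simpa using hs

theorem eq_sum_rankOne_of_biorthogonal [DecidableEq κ] {d c : κ → H}
    (hc : ∀ k j, inner ℂ (c k) (d j) = if k = j then 1 else 0)
    {B : H →ₗ[ℂ] H} (hB : ∀ ψ, (∀ k, inner ℂ (d k) ψ = 0) → B ψ = 0) :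
    B = ∑ k, rankOne (B (c k)) (d k) := by
  ext ψ
  set p := ∑ k, inner ℂ (d k) ψ • c k
  have hperp : ∀ j, inner ℂ (d j) (ψ - p) = 0 := by
    intro j
    simp [p, inner_swap_eq_ite_of_biorthogonal hc]
  have hBp : B ψ = B p := sub_eq_zero.mp (by rw [← map_sub]; exact hB _ hperp)
  simp [hBp, p, LinearMap.sum_apply]

end

/-- discrete case of Theorem 1: if `d_1, …, d_m` are linearly independent and
`∑_s A_s* A_s = ∑_k |d_k⟩⟨d_k|`, then there are vectors `φ_{ks}` with
`A_s = ∑_k |φ_{ks}⟩⟨d_k|` and `∑_s ⟨φ_{ks}, φ_{ls}⟩ = δ_{kl}`. -/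
theorem stmt_3 {H : Type*} [NormedAddCommGroup H] [InnerProductSpace ℂ H]
    [FiniteDimensional ℂ H] (m r : ℕ) (d : Fin m → H)
    (hd : LinearIndependent ℂ d)
    (A : Fin r → (H →ₗ[ℂ] H))
    (hA : ∑ s : Fin r, LinearMap.adjoint (A s) ∘ₗ A s
      = ∑ k : Fin m, rankOne (d k) (d k)) :
    ∃ φ : Fin m → Fin r → H,
      (∀ s, A s = ∑ k : Fin m, rankOne (φ k s) (d k)) ∧
      (∀ k l : Fin m,
        ∑ s : Fin r, (inner ℂ (φ k s) (φ l s) : ℂ) = if k = l then 1 else 0) := by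
  obtain ⟨c, hc⟩ := hd.exists_biorthogonal
  refine ⟨fun k s => A s (c k), fun s => eq_sum_rankOne_of_biorthogonal hc
    fun ψ hψ => apply_eq_zero_of_sum_adjoint_comp_self_eq hA hψ s, fun k l => ?_⟩
  rw [← inner_sum_adjoint_comp_self_apply, hA, inner_sum_rankOne_self_apply]
  simp [hc, inner_swap_eq_ite_of_biorthogonal hc]
end

section
/- Let H be a complex inner product space, let m be a positive integer, let s ↦ φ_{ks} ∈ H for 1 ≤ k, s ≤ m, and let k ↦ s_k ∈ {1,…,m} be a function. Assume (i) ⟨φ_{a s_k}, φ_{b s_k}⟩ = δ_{ak} δ_{bk} for all 1 ≤ a, b, k ≤ m, and (ii) ∑_{s=1}^m ⟨φ_{ks}, φ_{ls}⟩ = δ_{kl} for all 1 ≤ k, l ≤ m. Then for every k and every s ≠ s_k one has φ_{ks} = 0, and ‖φ_{k s_k}‖ = 1. -/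
/-! Condition (ii) with `k = l` says that the squared norms `‖φ_{ks}‖²` sum to `1` over `s`,
while condition (i) with `a = b = k` says that the single term `s = s_k` already equals `1`;
the remaining nonnegative terms must therefore vanish. -/

open Finset

section

variable {𝕜 E : Type*} [RCLike 𝕜] [NormedAddCommGroup E] [InnerProductSpace 𝕜 E]

theorem norm_eq_one_of_inner_self_eq_one {x : E} (h : inner 𝕜 x x = 1) : ‖x‖ = 1 := by
  rw [inner_self_eq_norm_sq_to_K] at h
  have hsq : ‖x‖ ^ 2 = 1 := by exact_mod_cast h
  exact (pow_eq_one_iff_of_nonneg (norm_nonneg x) two_ne_zero).mp hsq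

theorem sum_norm_sq_eq_one_of_sum_inner_self_eq_one {ι : Type*} {s : Finset ι} {v : ι → E}
    (h : ∑ i ∈ s, inner 𝕜 (v i) (v i) = 1) : ∑ i ∈ s, ‖v i‖ ^ 2 = 1 := by
  simp only [inner_self_eq_norm_sq_to_K] at h
  exact_mod_cast h

end

theorem norm_eq_zero_of_sum_norm_sq_le_norm_sq {E ι : Type*} [SeminormedAddCommGroup E]
    [Fintype ι] [DecidableEq ι] {v : ι → E} {t : ι}
    (h : ∑ i, ‖v i‖ ^ 2 ≤ ‖v t‖ ^ 2) {s : ι} (hs : s ≠ t) : ‖v s‖ = 0 := by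
  have hrest : ∑ i ∈ univ.erase t, ‖v i‖ ^ 2 = 0 := by
    have := add_sum_erase univ (fun i => ‖v i‖ ^ 2) (mem_univ t)
    have := sum_nonneg fun i (_ : i ∈ univ.erase t) => sq_nonneg ‖v i‖
    linarith
  have hsq := (sum_eq_zero_iff_of_nonneg fun i _ => sq_nonneg ‖v i‖).mp hrest s
    (mem_erase.mpr ⟨hs, mem_univ s⟩)
  exact pow_eq_zero_iff two_ne_zero |>.mp hsq

theorem stmt_10_general {H : Type*} [NormedAddCommGroup H] [InnerProductSpace ℂ H]
    (m : ℕ) (φ : Fin m → Fin m → H) (sk : Fin m → Fin m)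
    (h1 : ∀ a b k : Fin m,
      (inner ℂ (φ a (sk k)) (φ b (sk k)) : ℂ) = if a = k ∧ b = k then 1 else 0)
    (h2 : ∀ k l : Fin m,
      ∑ s : Fin m, (inner ℂ (φ k s) (φ l s) : ℂ) = if k = l then 1 else 0) :
    (∀ k s : Fin m, s ≠ sk k → φ k s = 0) ∧ (∀ k : Fin m, ‖φ k (sk k)‖ = 1) := by
  have hnorm (k : Fin m) : ‖φ k (sk k)‖ = 1 :=
    norm_eq_one_of_inner_self_eq_one ((h1 k k k).trans (if_pos ⟨rfl, rfl⟩))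
  have hsum (k : Fin m) : ∑ s, ‖φ k s‖ ^ 2 = 1 :=
    sum_norm_sq_eq_one_of_sum_inner_self_eq_one ((h2 k k).trans (if_pos rfl))
  refine ⟨fun k s hs => norm_eq_zero.mp ?_, hnorm⟩
  exact norm_eq_zero_of_sum_norm_sq_le_norm_sq (by rw [hsum, hnorm, one_pow]) hs

/-- if the Kraus vectors `φ_{ks}` (1 ≤ k, s ≤ m) of an instrument satisfy
(i) `⟨φ_{a s_k}, φ_{b s_k}⟩ = δ_{ak} δ_{bk}` and (ii) `∑_s ⟨φ_{ks}, φ_{ls}⟩ = δ_{kl}`,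
then `φ_{ks} = 0` for all `s ≠ s_k` and `‖φ_{k s_k}‖ = 1`. -/
theorem stmt_10 {H : Type*} [NormedAddCommGroup H] [InnerProductSpace ℂ H]
    (m : ℕ) (hm : 0 < m) (φ : Fin m → Fin m → H) (sk : Fin m → Fin m)
    (h1 : ∀ a b k : Fin m,
      (inner ℂ (φ a (sk k)) (φ b (sk k)) : ℂ) = if a = k ∧ b = k then 1 else 0)
    (h2 : ∀ k l : Fin m,
      ∑ s : Fin m, (inner ℂ (φ k s) (φ l s) : ℂ) = if k = l then 1 else 0) :
    (∀ k s : Fin m, s ≠ sk k → φ k s = 0) ∧ (∀ k : Fin m, ‖φ k (sk k)‖ = 1) :=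
  stmt_10_general m φ sk h1 h2
end
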